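/- arXiv:2501.00920 — 4 statements merged into one kernel-verified Lean document; each statement's English description precedes it below -/
import Mathlib

section
/- If u : ℝ^N × ℝ → ℝ is smooth and v(x,t) := (-π/t)^{N/2} e^{-|x|²/(4t)} u(-x/(2t), -1/(4t)) for t < 0 (the Appell transform of u), then (∂_t - Δ_x)v(x,t) = (π^{N/2}/4)(-t)^{-N/2-2} e^{-|x|²/(4t)} · ((∂_s - Δ_y)u)(-x/(2t), -1/(4t)) for all x ∈ ℝ^N and t < 0. -/
open Real

noncomputable section

/-- The heat operator `H u = ∂_t u - Δ_x u`, with the Laplacian written as the sum of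
second derivatives along the coordinate directions. -/
def heatOp {N : ℕ} (u : EuclideanSpace ℝ (Fin N) × ℝ → ℝ)
    (z : EuclideanSpace ℝ (Fin N) × ℝ) : ℝ :=
  deriv (fun s => u (z.1, s)) z.2 -
    ∑ i : Fin N,
      iteratedDeriv 2 (fun s : ℝ => u (z.1 + s • EuclideanSpace.single i (1 : ℝ), z.2)) 0

section appell_aux

variable {N : ℕ}

lemma appell_gdiff (u : EuclideanSpace ℝ (Fin N) × ℝ → ℝ) (hu : ContDiff ℝ (⊤ : ℕ∞) u)
    (v : EuclideanSpace ℝ (Fin N) × ℝ) :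
    Differentiable ℝ (fun w => fderiv ℝ u w v) := by
  have : ContDiff ℝ (⊤ : ℕ∞) (fun w => fderiv ℝ u w v) :=
    (ContinuousLinearMap.apply ℝ ℝ v).contDiff.comp (hu.fderiv_right (by simp))
  exact this.differentiable (by simp)

lemma appell_path_hasDerivAt (a : EuclideanSpace ℝ (Fin N)) (e : EuclideanSpace ℝ (Fin N))
    (b s : ℝ) : HasDerivAt (fun s : ℝ => (a + s • e, b)) ((e, (0:ℝ))) s := by
  have h1 : HasDerivAt (fun s : ℝ => a + s • e) e s := by
    simpa using ((hasDerivAt_id s).smul_const e).const_add a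
  exact h1.prodMk (hasDerivAt_const s b)

lemma appell_heatOp_eq (u : EuclideanSpace ℝ (Fin N) × ℝ → ℝ) (hu : ContDiff ℝ (⊤ : ℕ∞) u)
    (z : EuclideanSpace ℝ (Fin N) × ℝ) :
    heatOp u z = fderiv ℝ u z (0, 1) -
      ∑ i : Fin N, fderiv ℝ (fun w => fderiv ℝ u w (EuclideanSpace.single i 1, 0)) z
        (EuclideanSpace.single i 1, 0) := by
  have hdu := hu.differentiable (by simp)
  unfold heatOp
  congr 1
  · exact (((hdu z).hasFDerivAt.comp_hasDerivAt z.2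
      ((hasDerivAt_const z.2 z.1).prodMk (hasDerivAt_id z.2) : HasDerivAt _ _ _))).deriv
  · refine Finset.sum_congr rfl fun i _ => ?_
    set e : EuclideanSpace ℝ (Fin N) := EuclideanSpace.single i 1
    have h1 : deriv (fun s : ℝ => u (z.1 + s • e, z.2)) =
        fun s => fderiv ℝ u (z.1 + s • e, z.2) (e, 0) := by
      funext s
      exact ((hdu _).hasFDerivAt.comp_hasDerivAt s (appell_path_hasDerivAt z.1 e z.2 s)).deriv
    rw [iteratedDeriv_succ, iteratedDeriv_one, h1]
    have h2 : HasDerivAt (fun s : ℝ => fderiv ℝ u (z.1 + s • e, z.2) (e, 0))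
        (fderiv ℝ (fun w => fderiv ℝ u w (e, 0)) (z.1 + (0:ℝ) • e, z.2) (e, 0)) 0 :=
      by
        have := ((appell_gdiff u hu (e, 0)) (z.1 + (0:ℝ) • e, z.2)).hasFDerivAt.comp_hasDerivAt 0
          (appell_path_hasDerivAt z.1 e z.2 0)
        exact this
    simpa using h2.deriv

lemma appell_hasDerivAt_const_div (a : ℝ) {t : ℝ} (ht : t ≠ 0) :
    HasDerivAt (fun s : ℝ => a / s) (-a / t ^ 2) t := by
  have h := (hasDerivAt_inv ht).const_mul a
  have hfun : (fun s : ℝ => a / s) = fun s : ℝ => a * s⁻¹ := by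
    funext s; rw [div_eq_mul_inv]
  rw [hfun]
  convert h using 1
  · rfl
  · rfl
  · ring

lemma appell_hasDerivAt_div_mul (a b : ℝ) {t : ℝ} (ht : t ≠ 0) :
    HasDerivAt (fun s : ℝ => a / (b * s)) (-(a / b) / t ^ 2) t := by
  have hfun : (fun s : ℝ => a / (b * s)) = fun s : ℝ => (a / b) / s := by
    funext s; rw [div_div]
  rw [hfun]
  exact appell_hasDerivAt_const_div (a / b) ht

lemma appell_basis_expand (x : EuclideanSpace ℝ (Fin N)) :
    x = ∑ i : Fin N, x i • (EuclideanSpace.single i (1:ℝ)) := by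
  ext j
  rw [show (∑ i : Fin N, x i • (EuclideanSpace.single i (1:ℝ))) j
      = ∑ i : Fin N, (x i • (EuclideanSpace.single i (1:ℝ))) j from
    by rw [WithLp.ofLp_sum]; exact Finset.sum_apply j Finset.univ _]
  simp [EuclideanSpace.single_apply]

lemma appell_norm_sq_expand (x : EuclideanSpace ℝ (Fin N)) :
    ‖x‖ ^ 2 = ∑ i : Fin N, (x i) ^ 2 := by
  rw [EuclideanSpace.norm_eq]
  rw [Real.sq_sqrt (by positivity)]
  congr 1; funext i; simp [sq_abs]

lemma appell_fderiv_split (u : EuclideanSpace ℝ (Fin N) × ℝ → ℝ) (x : EuclideanSpace ℝ (Fin N))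
    (p : EuclideanSpace ℝ (Fin N) × ℝ) (a b : ℝ) :
    fderiv ℝ u p (a • x, b)
      = a * (∑ i : Fin N, x i * fderiv ℝ u p (EuclideanSpace.single i 1, 0))
        + b * fderiv ℝ u p (0, 1) := by
  set L := fderiv ℝ u p with hL
  have hdecomp : ((a • x, b) : EuclideanSpace ℝ (Fin N) × ℝ)
      = a • ((x, 0) : EuclideanSpace ℝ (Fin N) × ℝ)
        + b • ((0, 1) : EuclideanSpace ℝ (Fin N) × ℝ) := by
    rw [Prod.ext_iff]; constructor <;> simp
  have hLx : L (x, 0) = ∑ i : Fin N, x i * L (EuclideanSpace.single i 1, 0) := by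
    calc L (x, 0) = (L.comp (ContinuousLinearMap.inl ℝ (EuclideanSpace ℝ (Fin N)) ℝ)) x := by
          simp
      _ = (L.comp (ContinuousLinearMap.inl ℝ (EuclideanSpace ℝ (Fin N)) ℝ))
            (∑ i : Fin N, x i • EuclideanSpace.single i (1:ℝ)) := by rw [← appell_basis_expand]
      _ = ∑ i : Fin N, x i * L (EuclideanSpace.single i 1, 0) := by
          rw [map_sum]
          exact Finset.sum_congr rfl fun i _ => by rw [map_smul]; simp
  rw [hdecomp, map_add, map_smul, map_smul, smul_eq_mul, smul_eq_mul, hLx]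

end appell_aux

set_option maxHeartbeats 2000000 in
/-- The Appell transform `v(x,t) = (-π/t)^{N/2} e^{-|x|²/(4t)} u(A⁻¹(x,t))` of a smooth `u`
satisfies `H v(x,t) = (π^{N/2}/4)(-t)^{-N/2-2} e^{-|x|²/(4t)} (H u)(A⁻¹(x,t))` for `t < 0`. -/
theorem appell_transform_heatOp (N : ℕ) (u : EuclideanSpace ℝ (Fin N) × ℝ → ℝ)
    (hu : ContDiff ℝ (⊤ : ℕ∞) u) (x : EuclideanSpace ℝ (Fin N)) (t : ℝ) (ht : t < 0) :
    heatOp (fun z => (-π / z.2) ^ ((N : ℝ) / 2) * Real.exp (-‖z.1‖ ^ 2 / (4 * z.2)) *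
        u ((-1 / (2 * z.2)) • z.1, -1 / (4 * z.2))) (x, t)
      = (π ^ ((N : ℝ) / 2) / 4) * (-t) ^ (-(N : ℝ) / 2 - 2) * Real.exp (-‖x‖ ^ 2 / (4 * t)) *
        heatOp u ((-1 / (2 * t)) • x, -1 / (4 * t)) := by
  have htne : t ≠ 0 := ne_of_lt ht
  have hmt : (0:ℝ) < -t := neg_pos.mpr ht
  have hbase : (0:ℝ) < -π / t := by
    have h1 : π / t < 0 := div_neg_of_pos_of_neg pi_pos ht
    rw [neg_div]; linarith
  have hdu := hu.differentiable (by simp)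
  -- unfold the heat operator on the transform
  have hL : heatOp (fun z => (-π / z.2) ^ ((N : ℝ) / 2) * Real.exp (-‖z.1‖ ^ 2 / (4 * z.2)) *
        u ((-1 / (2 * z.2)) • z.1, -1 / (4 * z.2))) (x, t)
      = deriv (fun s : ℝ => (-π / s) ^ ((N : ℝ) / 2) * Real.exp (-‖x‖ ^ 2 / (4 * s)) *
          u ((-1 / (2 * s)) • x, -1 / (4 * s))) t -
        ∑ i : Fin N, iteratedDeriv 2 (fun s : ℝ => (-π / t) ^ ((N : ℝ) / 2) *
          Real.exp (-‖x + s • EuclideanSpace.single i (1:ℝ)‖ ^ 2 / (4 * t)) *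
          u ((-1 / (2 * t)) • (x + s • EuclideanSpace.single i (1:ℝ)), -1 / (4 * t))) 0 := rfl
  rw [hL]
  -- the time derivative
  have hT : HasDerivAt
      (fun s : ℝ => (-π / s) ^ ((N : ℝ) / 2) * Real.exp (-‖x‖ ^ 2 / (4 * s)) *
        u ((-1 / (2 * s)) • x, -1 / (4 * s)))
      ((-(-π) / t ^ 2 * ((N : ℝ) / 2) * (-π / t) ^ ((N : ℝ) / 2 - 1) *
          Real.exp (-‖x‖ ^ 2 / (4 * t)) +
        (-π / t) ^ ((N : ℝ) / 2) *
          (Real.exp (-‖x‖ ^ 2 / (4 * t)) * (-(-‖x‖ ^ 2 / 4) / t ^ 2))) *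
          u ((-1 / (2 * t)) • x, -1 / (4 * t)) +
        (-π / t) ^ ((N : ℝ) / 2) * Real.exp (-‖x‖ ^ 2 / (4 * t)) *
          (fderiv ℝ u ((-1 / (2 * t)) • x, -1 / (4 * t))
            ((-(-1 / 2) / t ^ 2) • x, -(-1 / 4) / t ^ 2))) t := by
    have ha : HasDerivAt (fun s : ℝ => (-π / s) ^ ((N : ℝ) / 2))
        (-(-π) / t ^ 2 * ((N : ℝ) / 2) * (-π / t) ^ ((N : ℝ) / 2 - 1)) t :=
      (appell_hasDerivAt_const_div (-π) htne).rpow_const (Or.inl (ne_of_gt hbase))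
    have hb : HasDerivAt (fun s : ℝ => Real.exp (-‖x‖ ^ 2 / (4 * s)))
        (Real.exp (-‖x‖ ^ 2 / (4 * t)) * (-(-‖x‖ ^ 2 / 4) / t ^ 2)) t :=
      (appell_hasDerivAt_div_mul (-‖x‖ ^ 2) 4 htne).exp
    have hphi : HasDerivAt (fun s : ℝ =>
        (((-1 / (2 * s)) • x : EuclideanSpace ℝ (Fin N)), -1 / (4 * s)))
        ((-(-1 / 2) / t ^ 2) • x, -(-1 / 4) / t ^ 2) t :=
      ((appell_hasDerivAt_div_mul (-1) 2 htne).smul_const x).prodMk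
        (appell_hasDerivAt_div_mul (-1) 4 htne)
    have hw := (hdu ((-1 / (2 * t)) • x, -1 / (4 * t))).hasFDerivAt.comp_hasDerivAt t hphi
    exact (ha.mul hb).mul hw
  rw [hT.deriv]
  -- the spatial second derivatives
  have hspat : ∀ i : Fin N,
      iteratedDeriv 2 (fun s : ℝ => (-π / t) ^ ((N : ℝ) / 2) *
          Real.exp (-‖x + s • EuclideanSpace.single i (1:ℝ)‖ ^ 2 / (4 * t)) *
          u ((-1 / (2 * t)) • (x + s • EuclideanSpace.single i (1:ℝ)), -1 / (4 * t))) 0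
        = (x i) ^ 2 * ((-π / t) ^ ((N : ℝ) / 2) * Real.exp (-‖x‖ ^ 2 / (4 * t)) *
              u ((-1 / (2 * t)) • x, -1 / (4 * t)) / (4 * t ^ 2)) +
          -((-π / t) ^ ((N : ℝ) / 2) * Real.exp (-‖x‖ ^ 2 / (4 * t)) *
              u ((-1 / (2 * t)) • x, -1 / (4 * t))) / (2 * t) +
          (x i * fderiv ℝ u ((-1 / (2 * t)) • x, -1 / (4 * t))
              (EuclideanSpace.single i 1, 0)) *
            ((-π / t) ^ ((N : ℝ) / 2) * Real.exp (-‖x‖ ^ 2 / (4 * t)) / (2 * t ^ 2)) +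
          fderiv ℝ (fun w => fderiv ℝ u w (EuclideanSpace.single i 1, 0))
              ((-1 / (2 * t)) • x, -1 / (4 * t)) (EuclideanSpace.single i 1, 0) *
            ((-π / t) ^ ((N : ℝ) / 2) * Real.exp (-‖x‖ ^ 2 / (4 * t)) / (4 * t ^ 2)) := by
    intro i
    set e : EuclideanSpace ℝ (Fin N) := EuclideanSpace.single i (1:ℝ) with he
    set a : ℝ := x i with ha
    have hnorm : ∀ s : ℝ, ‖x + s • e‖ ^ 2 = ‖x‖ ^ 2 + 2 * a * s + s ^ 2 := by
      intro s
      rw [norm_add_sq_real, real_inner_smul_right]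
      have h1 : (inner ℝ x e : ℝ) = a := by
        rw [he, ha]; simp [EuclideanSpace.inner_single_right]
      have h2 : ‖s • e‖ ^ 2 = s ^ 2 := by
        rw [norm_smul, he, EuclideanSpace.norm_single]
        simp [Real.norm_eq_abs, sq_abs, mul_pow]
      rw [h1, h2]; ring
    have hfun : (fun s : ℝ => (-π / t) ^ ((N : ℝ) / 2) *
          Real.exp (-‖x + s • e‖ ^ 2 / (4 * t)) *
          u ((-1 / (2 * t)) • (x + s • e), -1 / (4 * t)))
        = fun s : ℝ => (-π / t) ^ ((N : ℝ) / 2) *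
          Real.exp (-(‖x‖ ^ 2 + 2 * a * s + s ^ 2) / (4 * t)) *
          u ((-1 / (2 * t)) • x + (-1 / (2 * t) * s) • e, -1 / (4 * t)) := by
      funext s; rw [hnorm s, smul_add, smul_smul]
    rw [hfun]
    have hq : ∀ s : ℝ, HasDerivAt (fun s : ℝ => -(‖x‖ ^ 2 + 2 * a * s + s ^ 2) / (4 * t))
        (-(2 * a + 2 * s) / (4 * t)) s := by
      intro s
      have h1 : HasDerivAt (fun s : ℝ => s ^ 2) (2 * s) s := by
        simpa using hasDerivAt_pow 2 s
      have h2 : HasDerivAt (fun s : ℝ => ‖x‖ ^ 2 + 2 * a * s) (2 * a) s := by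
        simpa using ((hasDerivAt_id s).const_mul (2 * a)).const_add (‖x‖ ^ 2)
      have h3 := ((h2.add h1).div_const (4 * t)).neg
      have hfun2 : (fun s : ℝ => -(‖x‖ ^ 2 + 2 * a * s + s ^ 2) / (4 * t))
          = fun s : ℝ => -((‖x‖ ^ 2 + 2 * a * s + s ^ 2) / (4 * t)) := by
        funext r; rw [neg_div]
      rw [hfun2, show -(2 * a + 2 * s) / (4 * t) = -((2 * a + 2 * s) / (4 * t)) from neg_div _ _]
      exact h3
    have hE : ∀ s : ℝ, HasDerivAt
        (fun s : ℝ => Real.exp (-(‖x‖ ^ 2 + 2 * a * s + s ^ 2) / (4 * t)))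
        (Real.exp (-(‖x‖ ^ 2 + 2 * a * s + s ^ 2) / (4 * t)) * (-(2 * a + 2 * s) / (4 * t))) s :=
      fun s => (hq s).exp
    have hψ : ∀ s : ℝ, HasDerivAt (fun s : ℝ =>
        (((-1 / (2 * t)) • x + (-1 / (2 * t) * s) • e : EuclideanSpace ℝ (Fin N)),
          -1 / (4 * t)))
        ((-1 / (2 * t)) • e, (0 : ℝ)) s := by
      intro s
      have h1 : HasDerivAt (fun s : ℝ => (-1 / (2 * t) * s) • e) ((-1 / (2 * t)) • e) s := by
        simpa using ((hasDerivAt_id s).const_mul (-1 / (2 * t))).smul_const e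
      exact (h1.const_add _).prodMk (hasDerivAt_const s _)
    have hpair : (((-1 / (2 * t)) • e, (0 : ℝ)) : EuclideanSpace ℝ (Fin N) × ℝ)
        = (-1 / (2 * t)) • ((e, 0) : EuclideanSpace ℝ (Fin N) × ℝ) := by
      rw [Prod.smul_mk, smul_zero]
    have hW : ∀ s : ℝ, HasDerivAt
        (fun s : ℝ => u ((-1 / (2 * t)) • x + (-1 / (2 * t) * s) • e, -1 / (4 * t)))
        (-1 / (2 * t) *
          fderiv ℝ u ((-1 / (2 * t)) • x + (-1 / (2 * t) * s) • e, -1 / (4 * t)) (e, 0)) s := by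
      intro s
      have h := ((hdu ((-1 / (2 * t)) • x + (-1 / (2 * t) * s) • e,
          -1 / (4 * t))).hasFDerivAt).comp_hasDerivAt s (hψ s)
      rw [hpair, map_smul, smul_eq_mul] at h
      exact h
    have hD1 : deriv (fun s : ℝ => (-π / t) ^ ((N : ℝ) / 2) *
          Real.exp (-(‖x‖ ^ 2 + 2 * a * s + s ^ 2) / (4 * t)) *
          u ((-1 / (2 * t)) • x + (-1 / (2 * t) * s) • e, -1 / (4 * t)))
        = fun s : ℝ =>
          (-π / t) ^ ((N : ℝ) / 2) *
              (Real.exp (-(‖x‖ ^ 2 + 2 * a * s + s ^ 2) / (4 * t)) *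
                (-(2 * a + 2 * s) / (4 * t))) *
            u ((-1 / (2 * t)) • x + (-1 / (2 * t) * s) • e, -1 / (4 * t)) +
          (-π / t) ^ ((N : ℝ) / 2) * Real.exp (-(‖x‖ ^ 2 + 2 * a * s + s ^ 2) / (4 * t)) *
            (-1 / (2 * t) *
              fderiv ℝ u ((-1 / (2 * t)) • x + (-1 / (2 * t) * s) • e, -1 / (4 * t)) (e, 0)) := by
      funext s
      exact (((hE s).const_mul _).mul (hW s)).deriv
    have hm : HasDerivAt (fun s : ℝ => -(2 * a + 2 * s) / (4 * t)) (-2 / (4 * t)) 0 := by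
      have h1 : HasDerivAt (fun s : ℝ => 2 * a + 2 * s) 2 0 := by
        simpa using ((hasDerivAt_id (0:ℝ)).const_mul 2).const_add (2 * a)
      have h2 := (h1.div_const (4 * t)).neg
      have hfun2 : (fun s : ℝ => -(2 * a + 2 * s) / (4 * t))
          = fun s : ℝ => -((2 * a + 2 * s) / (4 * t)) := by
        funext r; rw [neg_div]
      rw [hfun2, show (-2 : ℝ) / (4 * t) = -(2 / (4 * t)) from neg_div _ _]
      exact h2
    have hg0 : HasDerivAt (fun s : ℝ =>
        fderiv ℝ u ((-1 / (2 * t)) • x + (-1 / (2 * t) * s) • e, -1 / (4 * t)) (e, 0))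
        (-1 / (2 * t) * fderiv ℝ (fun w => fderiv ℝ u w (e, 0))
          ((-1 / (2 * t)) • x + (-1 / (2 * t) * (0:ℝ)) • e, -1 / (4 * t)) (e, 0)) 0 := by
      have h := ((appell_gdiff u hu (e, 0)) ((-1 / (2 * t)) • x + (-1 / (2 * t) * (0:ℝ)) • e,
          -1 / (4 * t))).hasFDerivAt.comp_hasDerivAt 0 (hψ 0)
      rw [hpair, map_smul, smul_eq_mul] at h
      exact h
    have h2nd : HasDerivAt (fun s : ℝ =>
          (-π / t) ^ ((N : ℝ) / 2) *
              (Real.exp (-(‖x‖ ^ 2 + 2 * a * s + s ^ 2) / (4 * t)) *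
                (-(2 * a + 2 * s) / (4 * t))) *
            u ((-1 / (2 * t)) • x + (-1 / (2 * t) * s) • e, -1 / (4 * t)) +
          (-π / t) ^ ((N : ℝ) / 2) * Real.exp (-(‖x‖ ^ 2 + 2 * a * s + s ^ 2) / (4 * t)) *
            (-1 / (2 * t) *
              fderiv ℝ u ((-1 / (2 * t)) • x + (-1 / (2 * t) * s) • e, -1 / (4 * t)) (e, 0)))
        (((-π / t) ^ ((N : ℝ) / 2) *
            (Real.exp (-(‖x‖ ^ 2 + 2 * a * (0:ℝ) + (0:ℝ) ^ 2) / (4 * t)) *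
                (-(2 * a + 2 * (0:ℝ)) / (4 * t)) * (-(2 * a + 2 * (0:ℝ)) / (4 * t)) +
              Real.exp (-(‖x‖ ^ 2 + 2 * a * (0:ℝ) + (0:ℝ) ^ 2) / (4 * t)) * (-2 / (4 * t)))) *
            u ((-1 / (2 * t)) • x + (-1 / (2 * t) * (0:ℝ)) • e, -1 / (4 * t)) +
          (-π / t) ^ ((N : ℝ) / 2) *
              (Real.exp (-(‖x‖ ^ 2 + 2 * a * (0:ℝ) + (0:ℝ) ^ 2) / (4 * t)) *
                (-(2 * a + 2 * (0:ℝ)) / (4 * t))) *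
            (-1 / (2 * t) *
              fderiv ℝ u ((-1 / (2 * t)) • x + (-1 / (2 * t) * (0:ℝ)) • e, -1 / (4 * t)) (e, 0)) +
          ((-π / t) ^ ((N : ℝ) / 2) *
              (Real.exp (-(‖x‖ ^ 2 + 2 * a * (0:ℝ) + (0:ℝ) ^ 2) / (4 * t)) *
                (-(2 * a + 2 * (0:ℝ)) / (4 * t))) *
            (-1 / (2 * t) *
              fderiv ℝ u ((-1 / (2 * t)) • x + (-1 / (2 * t) * (0:ℝ)) • e, -1 / (4 * t)) (e, 0)) +
           (-π / t) ^ ((N : ℝ) / 2) *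
              Real.exp (-(‖x‖ ^ 2 + 2 * a * (0:ℝ) + (0:ℝ) ^ 2) / (4 * t)) *
            (-1 / (2 * t) * (-1 / (2 * t) * fderiv ℝ (fun w => fderiv ℝ u w (e, 0))
              ((-1 / (2 * t)) • x + (-1 / (2 * t) * (0:ℝ)) • e, -1 / (4 * t)) (e, 0))))) 0 := by
      exact ((((hE 0).mul hm).const_mul _).mul (hW 0)).add
        (((hE 0).const_mul _).mul (hg0.const_mul _))
    have hpt0 : ((-1 / (2 * t)) • x + (-1 / (2 * t) * (0:ℝ)) • e : EuclideanSpace ℝ (Fin N))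
        = (-1 / (2 * t)) • x := by simp
    have hexp0 : -(‖x‖ ^ 2 + 2 * a * (0:ℝ) + (0:ℝ) ^ 2) / (4 * t) = -‖x‖ ^ 2 / (4 * t) := by
      norm_num
    rw [iteratedDeriv_succ, iteratedDeriv_one, hD1, h2nd.deriv, hpt0, hexp0]
    field_simp
    ring
  rw [Finset.sum_congr rfl fun i _ => hspat i]
  rw [appell_heatOp_eq u hu ((-1 / (2 * t)) • x, -1 / (4 * t))]
  rw [appell_fderiv_split u x ((-1 / (2 * t)) • x, -1 / (4 * t))
    (-(-1 / 2) / t ^ 2) (-(-1 / 4) / t ^ 2)]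
  rw [Finset.sum_add_distrib, Finset.sum_add_distrib, Finset.sum_add_distrib,
    ← Finset.sum_mul, ← Finset.sum_mul, ← Finset.sum_mul, Finset.sum_const,
    Finset.card_univ, Fintype.card_fin, nsmul_eq_mul, ← appell_norm_sq_expand]
  -- rpow bookkeeping
  have hP : (0:ℝ) < (-t) ^ ((N : ℝ) / 2) := Real.rpow_pos_of_pos hmt _
  have hpiK : π ^ ((N : ℝ) / 2) = (-π / t) ^ ((N : ℝ) / 2) * (-t) ^ ((N : ℝ) / 2) := by
    rw [← Real.mul_rpow hbase.le hmt.le]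
    congr 1
    field_simp
  have hmt2 : (-t) ^ (-(N : ℝ) / 2 - 2) = ((-t) ^ ((N : ℝ) / 2))⁻¹ * (t ^ 2)⁻¹ := by
    rw [show (-(N:ℝ) / 2 - 2 : ℝ) = (-((N:ℝ) / 2)) + (-(((2:ℕ)):ℝ)) by push_cast; ring,
      Real.rpow_add hmt, Real.rpow_neg hmt.le, Real.rpow_neg hmt.le, Real.rpow_natCast,
      neg_sq]
  have hK1 : (-π / t) ^ ((N : ℝ) / 2 - 1) = (-π / t) ^ ((N : ℝ) / 2) / (-π / t) := by
    rw [Real.rpow_sub hbase, Real.rpow_one]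
  rw [hK1, hpiK, hmt2]
  field_simp
  ring
end
end

section
/- If v : ℝ^N × ℝ → ℝ is smooth and w(x,t) := F(x,t) v(x/(2t), -1/(4t)) for t > 0, where F(x,t) = (4πt)^{-N/2} e^{-|x|²/(4t)}, then (∂_t - Δ_x)w(x,t) = (1/(4t²)) F(x,t) · ((∂_s - Δ_y)v)(x/(2t), -1/(4t)) for all x ∈ ℝ^N and t > 0. -/
open Real

noncomputable section

/-- The Gauss–Weierstrass kernel `F(x,t) = (4πt)^{-N/2} e^{-|x|²/(4t)}` for `t > 0`, `0` else. -/
def gaussF (N : ℕ) (x : EuclideanSpace ℝ (Fin N)) (t : ℝ) : ℝ :=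
  if 0 < t then (4 * π * t) ^ (-(N : ℝ) / 2) * Real.exp (-‖x‖ ^ 2 / (4 * t)) else 0


section Helpers
variable {N : ℕ} {v : EuclideanSpace ℝ (Fin N) × ℝ → ℝ}

lemma dir_space (hv : ContDiff ℝ (⊤ : ℕ∞) v) (y a : EuclideanSpace ℝ (Fin N)) (s₀ σ : ℝ) :
    HasDerivAt (fun τ => v (y + τ • a, s₀)) (fderiv ℝ v (y + σ • a, s₀) (a, 0)) σ := by
  have h1 : HasDerivAt (fun τ : ℝ => y + τ • a) a σ := by
    simpa using (((hasDerivAt_id σ).smul_const a).const_add y)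
  exact ((hv.differentiable (by simp) _).hasFDerivAt).comp_hasDerivAt σ
    (h1.prodMk (hasDerivAt_const σ s₀))

lemma dir_time (hv : ContDiff ℝ (⊤ : ℕ∞) v) (y : EuclideanSpace ℝ (Fin N)) (s₀ : ℝ) :
    HasDerivAt (fun s => v (y, s)) (fderiv ℝ v (y, s₀) (0, 1)) s₀ := by
  have := ((hv.differentiable (by simp) (y, s₀)).hasFDerivAt).comp_hasDerivAt s₀
    ((hasDerivAt_const s₀ y).prodMk (hasDerivAt_id s₀))
  simpa [Function.comp_def] using this

lemma fderiv_decomp (y x : EuclideanSpace ℝ (Fin N)) (s₀ c d : ℝ) :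
    fderiv ℝ v (y, s₀) (c • x, d)
      = c * (∑ i, x i * fderiv ℝ v (y, s₀) (EuclideanSpace.single i (1:ℝ), 0))
        + d * fderiv ℝ v (y, s₀) (0, 1) := by
  set L := fderiv ℝ v (y, s₀)
  have hx : ((x, 0) : EuclideanSpace ℝ (Fin N) × ℝ)
      = ∑ i, (x i) • ((EuclideanSpace.single i (1:ℝ), 0) : EuclideanSpace ℝ (Fin N) × ℝ) := by
    ext
    · show x _ = _
      rw [Prod.fst_sum, WithLp.ofLp_sum, Finset.sum_apply]
      simp [EuclideanSpace.single_apply]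
    · simp [Prod.snd_sum]
  have h1 : ((c • x, d) : EuclideanSpace ℝ (Fin N) × ℝ)
      = c • ((x, 0) : EuclideanSpace ℝ (Fin N) × ℝ)
        + d • ((0, 1) : EuclideanSpace ℝ (Fin N) × ℝ) := by
    ext <;> simp
  rw [h1, map_add, map_smul, map_smul, hx, map_sum]
  simp only [smul_eq_mul, Finset.mul_sum]
  refine congrArg₂ (· + ·) (Finset.sum_congr rfl fun i _ => ?_) rfl
  rw [map_smul, smul_eq_mul]

lemma time_part (hv : ContDiff ℝ (⊤ : ℕ∞) v) (x : EuclideanSpace ℝ (Fin N)) (t : ℝ) (ht : 0 < t) :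
    deriv (fun τ => gaussF N x τ * v ((1 / (2 * τ)) • x, -1 / (4 * τ))) t
      = gaussF N x t * ((-(N:ℝ)/(2*t) + ‖x‖^2/(4*t^2)) * v ((1/(2*t)) • x, -1/(4*t))
          + fderiv ℝ v ((1/(2*t)) • x, -1/(4*t)) ((-(1/(2*t^2))) • x, 1/(4*t^2))) := by
  have ht' : t ≠ 0 := ht.ne'
  have h4π : (4*π*t) ≠ 0 := by positivity
  have h4t : (4*t) ≠ 0 := by positivity
  have h2t : (2*t) ≠ 0 := by positivity
  have hev : (fun τ => gaussF N x τ * v ((1 / (2 * τ)) • x, -1 / (4 * τ)))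
      =ᶠ[nhds t] (fun τ => (4*π*τ) ^ (-(N:ℝ)/2) * Real.exp (-‖x‖^2/(4*τ)) *
        v ((1 / (2 * τ)) • x, -1 / (4 * τ))) := by
    filter_upwards [Ioi_mem_nhds ht] with τ hτ
    simp only [gaussF, if_pos (Set.mem_Ioi.mp hτ)]
  rw [hev.deriv_eq]
  have hC : HasDerivAt (fun τ : ℝ => (4*π*τ) ^ (-(N:ℝ)/2))
      ((4*π*t) ^ (-(N:ℝ)/2) * (-(N:ℝ)/(2*t))) t := by
    have hb : HasDerivAt (fun τ : ℝ => 4*π*τ) (4*π) t := by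
      simpa using ((hasDerivAt_id t).const_mul (4*π))
    have h := hb.rpow_const (p := -(N:ℝ)/2) (Or.inl h4π)
    convert h using 1
    rw [Real.rpow_sub_one h4π]
    field_simp
  have hE : HasDerivAt (fun τ : ℝ => Real.exp (-‖x‖^2/(4*τ)))
      (Real.exp (-‖x‖^2/(4*t)) * (‖x‖^2/(4*t^2))) t := by
    have hb : HasDerivAt (fun τ : ℝ => 4*τ) 4 t := by
      simpa using ((hasDerivAt_id t).const_mul 4)
    have hq := (hasDerivAt_const t (-‖x‖^2 : ℝ)).div hb h4t
    have hq' : HasDerivAt (fun τ : ℝ => -‖x‖^2/(4*τ)) (‖x‖^2/(4*t^2)) t := by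
      refine hq.congr_deriv ?_
      field_simp
      ring
    exact hq'.exp
  have hV : HasDerivAt (fun τ : ℝ => v ((1 / (2 * τ)) • x, -1 / (4 * τ)))
      (fderiv ℝ v ((1/(2*t)) • x, -1/(4*t)) ((-(1/(2*t^2))) • x, 1/(4*t^2))) t := by
    have hb2 : HasDerivAt (fun τ : ℝ => 2*τ) 2 t := by
      simpa using ((hasDerivAt_id t).const_mul 2)
    have hb4 : HasDerivAt (fun τ : ℝ => 4*τ) 4 t := by
      simpa using ((hasDerivAt_id t).const_mul 4)
    have h1 : HasDerivAt (fun τ : ℝ => 1/(2*τ)) (-(1/(2*t^2))) t := by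
      refine ((hasDerivAt_const t (1:ℝ)).div hb2 h2t).congr_deriv ?_
      field_simp
      ring
    have h2 : HasDerivAt (fun τ : ℝ => -1/(4*τ)) (1/(4*t^2)) t := by
      refine ((hasDerivAt_const t (-1:ℝ)).div hb4 h4t).congr_deriv ?_
      field_simp
      ring
    exact ((hv.differentiable (by simp) _).hasFDerivAt).comp_hasDerivAt t
      ((h1.smul_const x).prodMk h2)
  erw [((hC.mul hE).mul hV).deriv]
  simp only [gaussF, if_pos ht, Pi.mul_apply]
  ring

lemma space_part (hv : ContDiff ℝ (⊤ : ℕ∞) v) (x : EuclideanSpace ℝ (Fin N)) (t : ℝ) (ht : 0 < t)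
    (i : Fin N) :
    iteratedDeriv 2 (fun σ : ℝ => gaussF N (x + σ • EuclideanSpace.single i (1:ℝ)) t *
        v ((1 / (2 * t)) • (x + σ • EuclideanSpace.single i (1:ℝ)), -1 / (4 * t))) 0
      = gaussF N x t * (((x i)^2/(4*t^2) - 1/(2*t)) * v ((1/(2*t)) • x, -1/(4*t))
          - (x i)/(2*t^2) * fderiv ℝ v ((1/(2*t)) • x, -1/(4*t)) (EuclideanSpace.single i (1:ℝ), 0)
          + (1/(4*t^2)) * iteratedDeriv 2
              (fun σ : ℝ => v ((1/(2*t)) • x + σ • EuclideanSpace.single i (1:ℝ), -1/(4*t))) 0) := by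
  have ht' : t ≠ 0 := ht.ne'
  have h2t : (2*t) ≠ 0 := by positivity
  have h4t : (4*t) ≠ 0 := by positivity
  set e : EuclideanSpace ℝ (Fin N) := EuclideanSpace.single i (1:ℝ) with he
  set y : EuclideanSpace ℝ (Fin N) := (1/(2*t)) • x with hy
  set s₀ : ℝ := -1/(4*t) with hs₀def
  set C : ℝ := (4*π*t) ^ (-(N:ℝ)/2) with hCdef
  set h : ℝ → ℝ := fun σ => v (y + σ • e, s₀) with hhdef
  set q : ℝ → ℝ := fun σ => -(‖x‖^2 + 2*(σ*(x i)) + σ^2)/(4*t) with hqdef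
  -- function identification
  have hfg : (fun σ : ℝ => gaussF N (x + σ • e) t * v ((1 / (2 * t)) • (x + σ • e), -1 / (4 * t)))
      = fun σ => C * (Real.exp (q σ) * h (σ/(2*t))) := by
    funext σ
    have hnorm : ‖x + σ • e‖^2 = ‖x‖^2 + 2*(σ*(x i)) + σ^2 := by
      rw [he, norm_add_sq_real]
      simp [real_inner_smul_right, EuclideanSpace.inner_single_right, norm_smul]
    have harg : (1/(2*t)) • (x + σ • e) = y + (σ/(2*t)) • e := by
      rw [hy, smul_add, smul_smul, show (1/(2*t))*σ = σ/(2*t) by ring]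
    simp only [gaussF, if_pos ht, harg, hhdef, hqdef, hnorm, ← hCdef, ← hs₀def]
    ring
  rw [hfg]
  -- smoothness of h
  have hcurve : ContDiff ℝ (⊤ : ℕ∞) (fun σ : ℝ => (y + σ • e, s₀)) :=
    (contDiff_const.add (contDiff_id.smul contDiff_const)).prodMk contDiff_const
  have hh : ContDiff ℝ (⊤ : ℕ∞) h := by rw [hhdef]; exact hv.comp hcurve
  have hd1 : Differentiable ℝ h := hh.differentiable (by simp)
  have hd2 : Differentiable ℝ (deriv h) :=
    ((contDiff_infty_iff_deriv.mp (hh.of_le (by simp))).2).differentiable (by simp)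
  have hder : ∀ σ : ℝ, HasDerivAt h (deriv h σ) σ := fun σ => (hd1 σ).hasDerivAt
  have hders : ∀ σ : ℝ, HasDerivAt (fun σ : ℝ => h (σ/(2*t)))
      (deriv h (σ/(2*t)) * (1/(2*t))) σ := by
    intro σ
    have := HasDerivAt.comp σ (hder (σ/(2*t))) ((hasDerivAt_id σ).div_const (2*t))
    simpa [Function.comp_def] using this
  have hders' : ∀ σ : ℝ, HasDerivAt (fun σ : ℝ => deriv h (σ/(2*t)))
      (deriv (deriv h) (σ/(2*t)) * (1/(2*t))) σ := by
    intro σ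
    have := HasDerivAt.comp σ ((hd2 (σ/(2*t))).hasDerivAt) ((hasDerivAt_id σ).div_const (2*t))
    simpa [Function.comp_def] using this
  have hqd : ∀ σ : ℝ, HasDerivAt q (-(2*(x i) + 2*σ)/(4*t)) σ := by
    intro σ
    have h1 : HasDerivAt (fun σ : ℝ => 2*(σ*(x i))) (2*(x i)) σ := by
      simpa using (((hasDerivAt_id σ).mul_const (x i)).const_mul 2)
    have h2 : HasDerivAt (fun σ : ℝ => σ^2) (2*σ) σ := by
      simpa using hasDerivAt_pow 2 σ
    have hpoly : HasDerivAt (fun σ : ℝ => ‖x‖^2 + 2*(σ*(x i)) + σ^2) (2*(x i) + 2*σ) σ := by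
      exact ((h1.const_add (‖x‖^2)).add h2)
    rw [hqdef]
    exact (hpoly.neg).div_const (4*t)
  have hexp : ∀ σ : ℝ, HasDerivAt (fun σ : ℝ => Real.exp (q σ))
      (Real.exp (q σ) * (-(2*(x i)+2*σ)/(4*t))) σ := fun σ => (hqd σ).exp
  -- first derivative of g
  have hderivg : deriv (fun σ : ℝ => C * (Real.exp (q σ) * h (σ/(2*t)))) = fun σ : ℝ =>
      C * (Real.exp (q σ) * (-(2*(x i)+2*σ)/(4*t)) * h (σ/(2*t))
            + Real.exp (q σ) * (deriv h (σ/(2*t)) * (1/(2*t)))) :=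
    funext fun σ => (((hexp σ).mul (hders σ)).const_mul C).deriv
  -- second derivative at 0
  have hlin : HasDerivAt (fun σ : ℝ => -(2*(x i)+2*σ)/(4*t)) (-2/(4*t)) 0 := by
    have hp : HasDerivAt (fun σ : ℝ => 2*(x i)+2*σ) 2 0 := by
      simpa using (((hasDerivAt_id (0:ℝ)).const_mul 2).const_add (2*(x i)))
    simpa using (hp.neg).div_const (4*t)
  have hG0 := ((((hexp 0).mul hlin).mul (hders 0)).add
      ((hexp 0).mul ((hders' 0).mul_const (1/(2*t))))).const_mul C
  -- assemble
  have h2iter : ∀ f : ℝ → ℝ, iteratedDeriv 2 f 0 = deriv (deriv f) 0 := by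
    intro f
    rw [iteratedDeriv_succ, iteratedDeriv_one]
  rw [h2iter, h2iter, hderivg]; erw [hG0.deriv]
  have hq0 : q 0 = -‖x‖^2/(4*t) := by rw [hqdef]; norm_num
  have hh0 : h 0 = v (y, s₀) := by rw [hhdef]; norm_num
  have hdh0 : deriv h 0 = fderiv ℝ v (y, s₀) (e, 0) := by
    rw [hhdef]
    have := (dir_space hv y e s₀ 0).deriv
    simpa using this
  simp only [gaussF, if_pos ht, zero_div, hq0, hh0, hdh0, ← hCdef, Pi.mul_apply]
  field_simp
  ring

end Helpers

/-- The inverse Appell transform `w(x,t) = F(x,t) v(x/(2t), -1/(4t))` of a smooth `v`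
satisfies `H w(x,t) = (1/(4t²)) F(x,t) (H v)(x/(2t), -1/(4t))` for `t > 0`. -/
theorem appell_inverse_transform_heatOp (N : ℕ) (v : EuclideanSpace ℝ (Fin N) × ℝ → ℝ)
    (hv : ContDiff ℝ (⊤ : ℕ∞) v) (x : EuclideanSpace ℝ (Fin N)) (t : ℝ) (ht : 0 < t) :
    heatOp (fun z => gaussF N z.1 z.2 *
        v ((1 / (2 * z.2)) • z.1, -1 / (4 * z.2))) (x, t)
      = (1 / (4 * t ^ 2)) * gaussF N x t *
        heatOp v ((1 / (2 * t)) • x, -1 / (4 * t)) := by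
  have ht' : t ≠ 0 := ht.ne'
  simp only [heatOp]
  rw [time_part hv x t ht,
    Finset.sum_congr rfl (fun i _ => space_part hv x t ht i),
    (dir_time hv ((1/(2*t)) • x) (-1/(4*t))).deriv,
    fderiv_decomp ((1/(2*t)) • x) x (-1/(4*t)) (-(1/(2*t^2))) (1/(4*t^2))]
  rw [← Finset.mul_sum]
  have hns : (∑ i, (x i)^2) = ‖x‖^2 := by
    rw [EuclideanSpace.norm_eq, Real.sq_sqrt (by positivity)]
    simp [sq_abs]
  have hsum : ∑ i : Fin N,
      ((x i ^ 2 / (4 * t ^ 2) - 1 / (2 * t)) * v ((1 / (2 * t)) • x, -1 / (4 * t)) -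
        x i / (2 * t ^ 2) *
          (fderiv ℝ v ((1 / (2 * t)) • x, -1 / (4 * t))) (EuclideanSpace.single i (1:ℝ), 0) +
        1 / (4 * t ^ 2) * iteratedDeriv 2
          (fun σ : ℝ => v ((1 / (2 * t)) • x + σ • EuclideanSpace.single i (1:ℝ), -1 / (4 * t))) 0)
    = (∑ i, (x i)^2) * (v ((1 / (2 * t)) • x, -1 / (4 * t)) / (4*t^2))
      + (∑ i, x i *
          (fderiv ℝ v ((1 / (2 * t)) • x, -1 / (4 * t))) (EuclideanSpace.single i (1:ℝ), 0))
            * (-(1/(2*t^2)))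
      + (∑ i, iteratedDeriv 2
          (fun σ : ℝ => v ((1 / (2 * t)) • x + σ • EuclideanSpace.single i (1:ℝ), -1 / (4 * t))) 0)
            * (1/(4*t^2))
      + (N : ℝ) * (-(1/(2*t)) * v ((1 / (2 * t)) • x, -1 / (4 * t))) := by
    rw [Finset.sum_mul, Finset.sum_mul, Finset.sum_mul]
    have hc : (N:ℝ) * (-(1/(2*t)) * v ((1 / (2 * t)) • x, -1 / (4 * t)))
        = ∑ _i : Fin N, (-(1/(2*t)) * v ((1 / (2 * t)) • x, -1 / (4 * t))) := by
      simp [Finset.sum_const, mul_comm]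
    rw [hc, ← Finset.sum_add_distrib, ← Finset.sum_add_distrib, ← Finset.sum_add_distrib]
    exact Finset.sum_congr rfl fun i _ => by ring
  rw [hsum, hns]
  field_simp
  ring
end
end

section
/- Let F(x,t) = (4πt)^{-N/2} e^{-|x|²/(4t)} for t > 0 and F(x,t) = 0 for t ≤ 0. Fix w = (y,τ) with τ < 0 and let w̃ = (ỹ,τ̃) = (-y/(2τ), -1/(4τ)). Then for every z = (x,t) with t > 0, F(x,t) · F(A(z) - w) = (τ̃/π)^{N/2} e^{-|ỹ|²/(4τ̃)} F(z - w̃), where A(x,t) = (x/(2t), -1/(4t)). -/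
open Real

noncomputable section

/-- Inverse Appell transform of the heat kernel with pole at `w = (y,τ)`, `τ < 0`: with
`w̃ = (ỹ,τ̃) = (-y/(2τ), -1/(4τ))` one has, for `z = (x,t)` with `t > 0`,
`F(x,t) F(A(z) - w) = (τ̃/π)^{N/2} e^{-|ỹ|²/(4τ̃)} F(z - w̃)`. -/
theorem appell_inverse_transform_heat_kernel (N : ℕ) (y : EuclideanSpace ℝ (Fin N)) (τ : ℝ)
    (hτ : τ < 0) (x : EuclideanSpace ℝ (Fin N)) (t : ℝ) (ht : 0 < t) :
    gaussF N x t * gaussF N ((1 / (2 * t)) • x - y) (-1 / (4 * t) - τ)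
      = ((-1 / (4 * τ)) / π) ^ ((N : ℝ) / 2) *
          Real.exp (-‖(-1 / (2 * τ)) • y‖ ^ 2 / (4 * (-1 / (4 * τ)))) *
          gaussF N (x - (-1 / (2 * τ)) • y) (t - (-1 / (4 * τ))) := by
  have hπ : (0:ℝ) < π := pi_pos
  have htne : t ≠ 0 := ne_of_gt ht
  have hτne : τ ≠ 0 := ne_of_lt hτ
  have key : (-1) / (4*t) * (4*t) = -1 := div_mul_cancel₀ _ (by positivity)
  have e1 : -1 / (4*t) - τ = -(4*t*τ+1) / (4*t) := by field_simp; ring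
  have e2 : t - (-1 / (4*τ)) = (4*t*τ+1) / (4*τ) := by field_simp; ring
  by_cases hs : 0 < -1 / (4 * t) - τ
  · -- main case
    have h4tτ : 4 * t * τ + 1 < 0 := by
      nlinarith [mul_pos hs (show (0:ℝ) < 4*t by linarith), key]
    have hu : 4*t*τ+1 ≠ 0 := ne_of_lt h4tτ
    have ht' : 0 < t - (-1 / (4 * τ)) := by
      rw [e2]
      apply div_pos_of_neg_of_neg h4tτ (by linarith)
    have hx2 : ‖(1 / (2 * t)) • x - y‖ ^ 2
        = (1/(2*t))^2 * ‖x‖^2 - 2 * ((1/(2*t)) * inner ℝ x y) + ‖y‖^2 := by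
      rw [@norm_sub_sq_real, norm_smul, real_inner_smul_left, mul_pow,
        Real.norm_eq_abs, sq_abs]
    have hy2 : ‖(-1 / (2 * τ)) • y‖ ^ 2 = (-1/(2*τ))^2 * ‖y‖^2 := by
      rw [norm_smul, mul_pow, Real.norm_eq_abs, sq_abs]
    have hz2 : ‖x - (-1 / (2 * τ)) • y‖ ^ 2
        = ‖x‖^2 - 2 * ((-1/(2*τ)) * inner ℝ x y) + (-1/(2*τ))^2 * ‖y‖^2 := by
      rw [@norm_sub_sq_real, norm_smul, real_inner_smul_right, mul_pow,
        Real.norm_eq_abs, sq_abs]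
    simp only [gaussF, if_pos ht, if_pos hs, if_pos ht', hx2, hy2, hz2]
    have hbase : 0 < 4 * π * t := by positivity
    have hbase2 : 0 < 4 * π * (-1 / (4 * t) - τ) := by positivity
    have hbase3 : 0 < 4 * π * (t - (-1 / (4 * τ))) := by positivity
    have hc : 0 < (-1 / (4 * τ)) / π := by
      apply div_pos _ hπ
      rw [div_pos_iff]; right; constructor <;> linarith
    have hcrw : ((-1 / (4 * τ)) / π) ^ ((N:ℝ) / 2)
        = (((-1 / (4 * τ)) / π)⁻¹) ^ (-(N:ℝ) / 2) := by
      rw [show -(N:ℝ)/2 = -((N:ℝ)/2) from neg_div _ _,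
        Real.rpow_neg (inv_nonneg.mpr hc.le), Real.inv_rpow hc.le, inv_inv]
    rw [hcrw]
    have hpow : (4 * π * t) ^ (-(N:ℝ)/2) * (4 * π * (-1 / (4 * t) - τ)) ^ (-(N:ℝ)/2)
        = (((-1 / (4 * τ)) / π)⁻¹) ^ (-(N:ℝ)/2) * (4 * π * (t - (-1 / (4 * τ)))) ^ (-(N:ℝ)/2) := by
      rw [← Real.mul_rpow hbase.le hbase2.le,
          ← Real.mul_rpow (inv_nonneg.mpr hc.le) hbase3.le]
      congr 1
      rw [e1, e2]
      obtain ⟨u, hu_def⟩ : ∃ u : ℝ, u = 4*t*τ+1 := ⟨_, rfl⟩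
      rw [← hu_def] at hu ⊢
      field_simp
    have hexp : Real.exp (-‖x‖ ^ 2 / (4 * t)) *
          Real.exp (-((1/(2*t))^2 * ‖x‖^2 - 2 * ((1/(2*t)) * inner ℝ x y) + ‖y‖^2) /
            (4 * (-1 / (4 * t) - τ)))
        = Real.exp (-((-1/(2*τ))^2 * ‖y‖^2) / (4 * (-1 / (4 * τ)))) *
          Real.exp (-(‖x‖^2 - 2 * ((-1/(2*τ)) * inner ℝ x y) + (-1/(2*τ))^2 * ‖y‖^2) /
            (4 * (t - (-1 / (4 * τ))))) := by
      rw [← Real.exp_add, ← Real.exp_add]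
      congr 1
      rw [e1, e2]
      obtain ⟨u, hu_def⟩ : ∃ u : ℝ, u = 4*t*τ+1 := ⟨_, rfl⟩
      rw [← hu_def] at hu ⊢
      field_simp
      rw [hu_def]
      ring
    calc (4 * π * t) ^ (-(N:ℝ)/2) * Real.exp (-‖x‖ ^ 2 / (4 * t)) *
          ((4 * π * (-1 / (4 * t) - τ)) ^ (-(N:ℝ)/2) *
            Real.exp (-((1/(2*t))^2 * ‖x‖^2 - 2 * ((1/(2*t)) * inner ℝ x y) + ‖y‖^2) /
              (4 * (-1 / (4 * t) - τ))))
        = ((4 * π * t) ^ (-(N:ℝ)/2) * (4 * π * (-1 / (4 * t) - τ)) ^ (-(N:ℝ)/2)) *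
          (Real.exp (-‖x‖ ^ 2 / (4 * t)) *
            Real.exp (-((1/(2*t))^2 * ‖x‖^2 - 2 * ((1/(2*t)) * inner ℝ x y) + ‖y‖^2) /
              (4 * (-1 / (4 * t) - τ)))) := by ring
      _ = ((((-1 / (4 * τ)) / π)⁻¹) ^ (-(N:ℝ)/2) * (4 * π * (t - (-1 / (4 * τ)))) ^ (-(N:ℝ)/2)) *
          (Real.exp (-((-1/(2*τ))^2 * ‖y‖^2) / (4 * (-1 / (4 * τ)))) *
            Real.exp (-(‖x‖^2 - 2 * ((-1/(2*τ)) * inner ℝ x y) + (-1/(2*τ))^2 * ‖y‖^2) /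
              (4 * (t - (-1 / (4 * τ)))))) := by rw [hpow, hexp]
      _ = _ := by ring
  · -- degenerate case: both sides zero
    push_neg at hs
    have h4 : 0 ≤ 4 * t * τ + 1 := by
      nlinarith [mul_nonneg (neg_nonneg.mpr hs) (show (0:ℝ) ≤ 4*t by linarith), key]
    have ht'' : ¬ (0 < t - (-1 / (4 * τ))) := by
      rw [e2, not_lt]
      exact div_nonpos_of_nonneg_of_nonpos h4 (by linarith)
    have hs' : ¬ (0 < -1 / (4 * t) - τ) := not_lt.mpr hs
    simp only [gaussF, if_neg hs', if_neg ht'', mul_zero]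
end
end

section
/- Let μ be a nonnegative measure with compact support K ⊂ ℝ^N × (0,∞), and define the h-potential P^h_μ(z) = ∫ F(z-w)/(h(z) h_*(w)) dμ(w) for z ∈ ℝ^N × (0,∞), where h, h_* are the fundamental solutions of the heat and adjoint heat equation with pole at (γ,0). Let A⁻¹(x,t) = (-x/(2t), -1/(4t)) map ℝ^N × (-∞,0) to ℝ^N × (0,∞). Then for all z ∈ ℝ^N × (-∞,0), P^h_μ(A⁻¹ z) = ∫ F(z-w)/(h̃(z) h̃_*(w)) d(μ ∘ A⁻¹)(w), i.e. the h-potential of μ pulled back by A⁻¹ equals the h̃-potential of the pushforward measure μ(A⁻¹) supported on AK. -/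
open Real MeasureTheory

noncomputable section

/-- Fundamental solution with pole at `(γ,0)`: `h(x,t) = (4πt)^{-N/2} e^{-|x-γ|²/(4t)}`. -/
def hFun (N : ℕ) (γ : EuclideanSpace ℝ (Fin N)) (z : EuclideanSpace ℝ (Fin N) × ℝ) : ℝ :=
  (4 * π * z.2) ^ (-(N : ℝ) / 2) * Real.exp (-‖z.1 - γ‖ ^ 2 / (4 * z.2))

/-- `h_*(x,t) = (π/t)^{N/2} e^{|x-γ|²/(4t)}`. -/
def hStarFun (N : ℕ) (γ : EuclideanSpace ℝ (Fin N)) (z : EuclideanSpace ℝ (Fin N) × ℝ) : ℝ :=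
  (π / z.2) ^ ((N : ℝ) / 2) * Real.exp (‖z.1 - γ‖ ^ 2 / (4 * z.2))

/-- `h̃(y,τ) = e^{⟨y,γ⟩ + |γ|² τ}`. -/
def hTilde (N : ℕ) (γ : EuclideanSpace ℝ (Fin N)) (z : EuclideanSpace ℝ (Fin N) × ℝ) : ℝ :=
  Real.exp ((inner ℝ z.1 γ : ℝ) + ‖γ‖ ^ 2 * z.2)

/-- `h̃_*(y,τ) = e^{-⟨y,γ⟩ - |γ|² τ}`. -/
def hTildeStar (N : ℕ) (γ : EuclideanSpace ℝ (Fin N)) (z : EuclideanSpace ℝ (Fin N) × ℝ) : ℝ :=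
  Real.exp (-(inner ℝ z.1 γ : ℝ) - ‖γ‖ ^ 2 * z.2)

/-- The Appell point transformation `A(x,t) = (x/(2t), -1/(4t))`. -/
def appellMap (N : ℕ) (p : EuclideanSpace ℝ (Fin N) × ℝ) : EuclideanSpace ℝ (Fin N) × ℝ :=
  ((1 / (2 * p.2)) • p.1, -1 / (4 * p.2))

/-- The inverse Appell point transformation `A⁻¹(x,t) = (-x/(2t), -1/(4t))`. -/
def appellMapInv (N : ℕ) (p : EuclideanSpace ℝ (Fin N) × ℝ) : EuclideanSpace ℝ (Fin N) × ℝ :=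
  ((-1 / (2 * p.2)) • p.1, -1 / (4 * p.2))

/-- Auxiliary algebraic rearrangement for products of powers and exponentials. -/
lemma auxExpProd (pa pb pt ps A T1 T2 B H1 H2 : ℝ) (hp : pa = pb * (pt * ps))
    (he : A + T1 + T2 = B + H1 + H2) :
    pa * Real.exp A * (Real.exp T1 * Real.exp T2)
      = pb * Real.exp B * (pt * Real.exp H1 * (ps * Real.exp H2)) := by
  calc pa * Real.exp A * (Real.exp T1 * Real.exp T2)
      = pb * (pt * ps) * (Real.exp A * Real.exp T1 * Real.exp T2) := by rw [hp]; ring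
    _ = pb * (pt * ps) * Real.exp (A + T1 + T2) := by rw [← Real.exp_add, ← Real.exp_add]
    _ = pb * (pt * ps) * (Real.exp B * Real.exp H1 * Real.exp H2) := by
        rw [he, Real.exp_add, Real.exp_add]
    _ = _ := by ring

/-- The pointwise Appell identity for the `h`-potential kernel. -/
lemma appell_kernel_identity (N : ℕ) (γ : EuclideanSpace ℝ (Fin N))
    (z w : EuclideanSpace ℝ (Fin N) × ℝ) (hτ : z.2 < 0) (hs : 0 < w.2) :
    gaussF N ((appellMapInv N z).1 - w.1) ((appellMapInv N z).2 - w.2) /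
        (hFun N γ (appellMapInv N z) * hStarFun N γ w)
      = gaussF N (z.1 - (appellMap N w).1) (z.2 - (appellMap N w).2) /
          (hTilde N γ z * hTildeStar N γ (appellMap N w)) := by
  obtain ⟨y, τ⟩ := z
  obtain ⟨ξ, s⟩ := w
  simp only at hτ hs
  have hτ0 : τ ≠ 0 := hτ.ne
  have hs0 : s ≠ 0 := hs.ne'
  have hnτ : -τ ≠ 0 := neg_ne_zero.2 hτ0
  have hnτpos : (0:ℝ) < -τ := by linarith
  have ht' : (0:ℝ) < -1 / (4 * τ) := div_pos_of_neg_of_neg (by norm_num) (by linarith)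
  have e4a : (4 * (-1 / (4 * τ) - s)) = (1 + 4 * τ * s) / (-τ) := by
    rw [eq_div_iff hnτ]; field_simp; ring
  have e4b : (4 * (τ - (-1 / (4 * s)))) = (1 + 4 * τ * s) / s := by
    rw [eq_div_iff hs0]; field_simp; ring
  have e4t : (4 * (-1 / (4 * τ))) = 1 / (-τ) := by rw [eq_div_iff hnτ]; field_simp
  simp only [appellMap, appellMapInv]
  by_cases h1 : 0 < 1 + 4 * τ * s
  · -- both kernels live, cross-multiply
    have ha : (0:ℝ) < -1 / (4 * τ) - s := by
      have : 0 < 4 * (-1 / (4 * τ) - s) := e4a ▸ div_pos h1 hnτpos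
      linarith
    have hb : (0:ℝ) < τ - (-1 / (4 * s)) := by
      have : 0 < 4 * (τ - (-1 / (4 * s))) := e4b ▸ div_pos h1 hs
      linarith
    rw [gaussF, gaussF, if_pos ha, if_pos hb]
    have hpi : (0:ℝ) < π := Real.pi_pos
    have hden1 : hFun N γ ((-1 / (2 * τ)) • y, -1 / (4 * τ)) * hStarFun N γ (ξ, s) ≠ 0 := by
      have h4t : (0:ℝ) < 4 * π * (-1 / (4 * τ)) := by positivity
      unfold hFun hStarFun
      positivity
    have hden2 : hTilde N γ (y, τ) * hTildeStar N γ ((1 / (2 * s)) • ξ, -1 / (4 * s)) ≠ 0 := by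
      unfold hTilde hTildeStar; positivity
    rw [div_eq_div_iff hden1 hden2]
    unfold hFun hStarFun hTilde hTildeStar
    simp only
    apply auxExpProd
    · -- the power identity
      have h2 : (π / s) ^ ((N : ℝ) / 2) = ((s / π) ^ (-(N : ℝ) / 2)) := by
        rw [neg_div, Real.rpow_neg (by positivity), ← Real.inv_rpow (by positivity), inv_div]
      rw [h2, ← Real.mul_rpow (by positivity) (by positivity),
        ← Real.mul_rpow (by positivity) (by positivity)]
      congr 1
      field_simp
      ring
    · -- the exponent identity
      rw [show (4 * (-1 / (4 * τ) - s)) = (1 + 4 * τ * s) / (-τ) from e4a,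
          show (4 * (τ - (-1 / (4 * s)))) = (1 + 4 * τ * s) / s from e4b,
          show (4 * (-1 / (4 * τ))) = 1 / (-τ) from e4t]
      simp only [norm_sub_sq_real, norm_smul, real_inner_smul_left, real_inner_smul_right,
        Real.norm_eq_abs, mul_pow, sq_abs]
      have hD : 1 + 4 * τ * s ≠ 0 := h1.ne'
      field_simp
      ring_nf
      have hinv : (1 + s * τ * 4) * (1 + s * τ * 4)⁻¹ = 1 := mul_inv_cancel₀ (by linarith)
      linear_combination (4 * s * ‖y‖ ^ 2 + 4 * τ * ‖ξ‖ ^ 2) * hinv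
  · -- both kernels vanish
    have hD : 1 + 4 * τ * s ≤ 0 := not_lt.1 h1
    have ha : ¬ (0:ℝ) < -1 / (4 * τ) - s := by
      have : 4 * (-1 / (4 * τ) - s) ≤ 0 :=
        e4a ▸ div_nonpos_of_nonpos_of_nonneg hD hnτpos.le
      intro hc; linarith
    have hb : ¬ (0:ℝ) < τ - (-1 / (4 * s)) := by
      have : 4 * (τ - (-1 / (4 * s))) ≤ 0 :=
        e4b ▸ div_nonpos_of_nonpos_of_nonneg hD hs.le
      intro hc; linarith
    rw [gaussF, gaussF, if_neg ha, if_neg hb, zero_div, zero_div]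

/-- For a nonnegative measure `μ` with compact support `K ⊂ ℝ^N × (0,∞)`, the pullback by
`A⁻¹` of the `h`-potential of `μ` equals the `h̃`-potential of the pushforward measure
`μ(A⁻¹)`. -/
theorem h_potential_appell (N : ℕ) (γ : EuclideanSpace ℝ (Fin N))
    (μ : Measure (EuclideanSpace ℝ (Fin N) × ℝ)) (K : Set (EuclideanSpace ℝ (Fin N) × ℝ))
    (hK : IsCompact K) (hKpos : K ⊆ {p | 0 < p.2}) (hμ : μ Kᶜ = 0)
    (z : EuclideanSpace ℝ (Fin N) × ℝ) (hz : z.2 < 0) :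
    (∫ w, gaussF N ((appellMapInv N z).1 - w.1) ((appellMapInv N z).2 - w.2) /
        (hFun N γ (appellMapInv N z) * hStarFun N γ w) ∂μ)
      = ∫ w, gaussF N (z.1 - w.1) (z.2 - w.2) /
          (hTilde N γ z * hTildeStar N γ w) ∂(Measure.map (appellMap N) μ) := by
  have hmap : Measurable (appellMap N) := by unfold appellMap; fun_prop
  have hfm : AEStronglyMeasurable
      (fun w : EuclideanSpace ℝ (Fin N) × ℝ => gaussF N (z.1 - w.1) (z.2 - w.2) /
        (hTilde N γ z * hTildeStar N γ w)) (Measure.map (appellMap N) μ) := by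
    apply Measurable.aestronglyMeasurable
    apply Measurable.div
    · unfold gaussF
      apply Measurable.ite
      · exact measurableSet_lt measurable_const (by fun_prop)
      · fun_prop
      · fun_prop
    · unfold hTildeStar
      exact (continuous_const.mul (Real.continuous_exp.comp
        (((continuous_fst.inner continuous_const)).neg.sub
          (continuous_const.mul (continuous_snd (X := EuclideanSpace ℝ (Fin N)) (Y := ℝ)))))).measurable
  rw [integral_map hmap.aemeasurable hfm]
  apply integral_congr_ae
  have hK' : ∀ᵐ w ∂μ, w ∈ K := by
    rw [ae_iff]
    exact hμ
  filter_upwards [hK'] with w hw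
  exact appell_kernel_identity N γ z w hz (hKpos hw)
end
end
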